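/- There is an absolute constant C such that for all integers ℓ ≥ 1 and N ≥ 10ℓ, and all integers r with 1 ≤ r < ℓ, the number of ℓ×N matrices M over ℚ with entries in {0,1}, of rank r, and possessing at least r+1 pairwise distinct nonzero rows (distinct as vectors of ℚ^N), is at most C · 2^{ℓ²} · 2^{(r − 1/10)·N}. -/

import Mathlib

/-!
Choose rows `T` forming a basis of the row space and a further row `w` among the `r + 1` distinct
nonzero ones that differs from all rows of `T`. Two distinct nonzero 0/1 vectors are linearly
independent, so the relation expressing `w` through the rows of `T` has at least three nonzero
coefficients `μ`. Each column of the `(r + 1) × N` submatrix formed by `w` and the rows of `T` is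
a 0/1 vector orthogonal to `μ`, and in every 3-dimensional subcube of `{0,1}^(r+1)` spanned by
three coordinates in the support of `μ` at most 3 of the 8 vertices are orthogonal to `μ`; this
leaves `3 · 2^(r-2)` choices per column. The rational vector `μ` itself is not finite data, but
the span of the columns is spanned by `r + 1` of them, so it is pinned down by a square Boolean
matrix. The other `l - r` rows are 0/1 vectors of the `r`-dimensional row space, of which there
are at most `2^r`. In total there are at most `2^l · 2^((r+1)^2) · (3 · 2^(r-2))^N · 2^(r(l-r))`
matrices, and since `3 ≤ 2^(8/5)` and `N ≥ 10 l` this is at most `2^(l^2) · 2^((r - 1/10) N)`.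
-/

/-- The dimension (over `ℚ`) of the span of the first `q` columns of the matrix `M`. -/
noncomputable def colSpanDim {l N : ℕ} (M : Matrix (Fin l) (Fin N) ℚ) (q : ℕ) : ℕ :=
  Module.finrank ℚ
    ↥(Submodule.span ℚ {v : Fin l → ℚ | ∃ j : Fin N, (j : ℕ) < q ∧ v = fun i => M i j})

open Finset Function Module Submodule Matrix
open Set (range)

theorem Nat.card_le_card_mul_of_card_fiber_le {α β : Type*} [Finite β] (f : α → β) {k : ℕ}
    (hk : ∀ b, Nat.card {a // f a = b} ≤ k) : Nat.card α ≤ Nat.card β * k := by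
  have := Fintype.ofFinite β
  rcases finite_or_infinite α with hα | hα
  · calc Nat.card α = ∑ b, Nat.card {a // f a = b} := by
          rw [← Nat.card_sigma, Nat.card_congr (Equiv.sigmaFiberEquiv f)]
      _ ≤ ∑ _b : β, k := Finset.sum_le_sum fun b _ => hk b
      _ = Nat.card β * k := by simp [Nat.card_eq_fintype_card]
  · simp [Nat.card_eq_zero_of_infinite]

def boolVec (K : Type*) [NatCast K] {ι : Type*} (x : ι → Bool) : ι → K :=
  fun i => (x i).toNat

section BoolVec

variable {K : Type*} [Field K] {ι n : Type*}

theorem boolVec_decide_eq [DecidableEq K] {v : ι → K} (hv : ∀ i, v i = 0 ∨ v i = 1) :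
    boolVec K (fun i => decide (v i = 1)) = v := by
  funext i
  rcases hv i with h | h <;> simp [boolVec, h]

theorem finite_zeroOne {m : Type*} [Finite m] [Finite n] [DecidableEq K]
    {P : Matrix m n K → Prop} (hP : ∀ M, P M → ∀ i j, M i j = 0 ∨ M i j = 1) :
    Finite {M // P M} :=
  Finite.of_injective (fun M i j => decide (M.1 i j = 1)) fun M M' h =>
    Subtype.ext <| funext fun i => by
      rw [← boolVec_decide_eq (hP _ M.2 i), ← boolVec_decide_eq (hP _ M'.2 i)]
      exact congrArg (boolVec K) (congrFun h i)

theorem boolVec_apply_inj {x y : ι → Bool} {i : ι} :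
    boolVec K x i = boolVec K y i ↔ x i = y i := by
  unfold boolVec
  cases x i <;> cases y i <;> simp

theorem boolVec_injective : Injective (boolVec K : (ι → Bool) → ι → K) :=
  fun _ _ h => funext fun i => boolVec_apply_inj.1 (congrFun h i)

theorem dotProduct_eq_zero_of_mem_span [Fintype ι] {μ : ι → K} {s : Set (ι → K)}
    (h : ∀ v ∈ s, μ ⬝ᵥ v = 0) {v : ι → K} (hv : v ∈ span K s) : μ ⬝ᵥ v = 0 :=
  (span_le (p := LinearMap.ker (dotProductBilin K K μ))).2 h hv

theorem exists_linearIndependent_comp_span_eq {V : Type*} [AddCommGroup V] [Module K V]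
    [FiniteDimensional K V] (v : n → V) :
    ∃ g : Fin (finrank K (span K (range v))) → n,
      LinearIndependent K (v ∘ g) ∧ span K (range (v ∘ g)) = span K (range v) := by
  obtain ⟨f, hf, hspan, hli⟩ := exists_fun_fin_finrank_span_eq K (range v)
  choose g hg using hf
  obtain rfl : v ∘ g = f := funext hg
  exact ⟨g, hli, hspan⟩

variable [Fintype ι]

theorem eq_zero_of_smul_add_smul_eq_zero_of_zeroOne {u v : n → K}
    (hu01 : ∀ j, u j = 0 ∨ u j = 1) (hv01 : ∀ j, v j = 0 ∨ v j = 1) (hu : u ≠ 0) (huv : u ≠ v)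
    {α β : K} (h : α • u + β • v = 0) : α = 0 := by
  by_contra hα
  obtain ⟨j, hj⟩ := Function.ne_iff.1 hu
  have hj' := congrFun h j
  simp only [Pi.add_apply, Pi.smul_apply, smul_eq_mul, (hu01 j).resolve_left hj, mul_one,
    Pi.zero_apply] at hj'
  have hvj : v j = 1 := (hv01 j).resolve_left fun h0 => hα (by simpa [h0] using hj')
  obtain rfl : β = -α := by linear_combination hj' - β * hvj
  rw [neg_smul, ← sub_eq_add_neg, ← smul_sub, smul_eq_zero, sub_eq_zero] at h
  exact huv (h.resolve_left hα)

theorem two_lt_ncard_support_of_sum_smul_eq_zero {u : ι → n → K} (hinj : Injective u)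
    (hne : ∀ i, u i ≠ 0) (h01 : ∀ i j, u i j = 0 ∨ u i j = 1) {μ : ι → K} (hμ : μ ≠ 0)
    (hdep : ∑ i, μ i • u i = 0) : 2 < (support μ).ncard := by
  classical
  obtain ⟨a, ha⟩ := Function.ne_iff.1 hμ
  have hpair : ∀ b, (∀ i, i ≠ a → i ≠ b → μ i = 0) → False := by
    intro b hb
    have hsum : ∑ i ∈ {a, b}, μ i • u i = 0 := by
      rw [Finset.sum_subset (subset_univ _) fun i _ hi => ?_]
      · exact hdep
      simp only [mem_insert, mem_singleton, not_or] at hi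
      simp [hb i hi.1 hi.2]
    by_cases hab : a = b
    · subst hab
      simp only [mem_singleton, insert_eq_of_mem, sum_singleton, smul_eq_zero] at hsum
      exact hsum.elim ha (hne a)
    · rw [sum_pair hab] at hsum
      exact ha (eq_zero_of_smul_add_smul_eq_zero_of_zeroOne (h01 a) (h01 b) (hne a)
        (hinj.ne hab) hsum)
  obtain ⟨b, hba, hb⟩ : ∃ b, b ≠ a ∧ μ b ≠ 0 := by
    by_contra! h
    exact hpair a fun i hia _ => h i hia
  obtain ⟨c, hca, hcb, hc⟩ : ∃ c, c ≠ a ∧ c ≠ b ∧ μ c ≠ 0 := by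
    by_contra! h
    exact hpair b h
  exact (Set.two_lt_ncard_iff (Set.toFinite _)).2
    ⟨a, b, c, ha, hb, hc, hba.symm, hca.symm, hcb.symm⟩

theorem exists_square_boolVec_span_eq (x : n → ι → Bool) :
    ∃ A : ι → ι → Bool,
      span K (range (boolVec K ∘ A)) = span K (range (boolVec K ∘ x)) := by
  obtain ⟨g, -, hspan⟩ := exists_linearIndependent_comp_span_eq (K := K) (boolVec K ∘ x)
  have hd : finrank K (span K (range (boolVec K ∘ x))) ≤ Fintype.card ι :=
    (Submodule.finrank_le _).trans (by simp)
  let e := (Fin.castLEEmb hd).trans (Fintype.equivFin ι).symm.toEmbedding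
  refine ⟨extend e (x ∘ g) fun _ _ => false, le_antisymm ?_ ?_⟩
  · refine span_le.2 (Set.range_subset_iff.2 fun i => ?_)
    by_cases hi : ∃ p, e p = i
    · obtain ⟨p, rfl⟩ := hi
      rw [Function.comp_apply, e.injective.extend_apply]
      exact subset_span ⟨g p, rfl⟩
    · rw [Function.comp_apply, extend_apply' _ _ _ hi]
      rw [show boolVec K (fun _ : ι => false) = 0 from funext fun _ => by simp [boolVec]]
      exact zero_mem _
  · refine hspan.ge.trans (span_mono ?_)
    exact (Set.range_subset_iff.2 fun p => ⟨e p, by simp [e.injective.extend_apply]⟩)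

theorem card_boolVec_mem_le (W : Submodule K (ι → K)) :
    Nat.card {x : ι → Bool // boolVec K x ∈ W} ≤ 2 ^ finrank K W := by
  obtain ⟨v, -, hv, -⟩ := exists_fun_fin_finrank_span_eq K (W : Set (ι → K))
  replace hv := hv.trans (span_eq W)
  obtain ⟨g, -, hg⟩ := exists_linearIndependent_comp_span_eq (K := K) fun j p => v p j
  have hd : finrank K (span K (range fun j p => v p j)) ≤ finrank K W :=
    (Submodule.finrank_le _).trans (by simp)
  -- The columns `g q` of the spanning family `v` span all its columns, so an element of `W`
  -- vanishing at the coordinates `g q` vanishes.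
  have key : ∀ w ∈ W, (∀ q, w (g q) = 0) → w = 0 := by
    intro w hw hwg
    rw [← hv] at hw
    obtain ⟨c, rfl⟩ := (mem_span_range_iff_exists_fun K).1 hw
    have hcol : ∀ j, (∑ p, c p • v p) j = c ⬝ᵥ fun p => v p j := fun j => by
      simp [dotProduct, Finset.sum_apply]
    funext j
    rw [hcol, Pi.zero_apply]
    refine dotProduct_eq_zero_of_mem_span ?_ (hg.ge (subset_span ⟨j, rfl⟩))
    rintro _ ⟨q, rfl⟩
    rw [Function.comp_apply, ← hcol]
    exact hwg q
  calc Nat.card {x : ι → Bool // boolVec K x ∈ W}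
      ≤ Nat.card (Fin (finrank K (span K (range fun j p => v p j))) → Bool) := by
        refine Nat.card_le_card_of_injective (fun x => x.1 ∘ g) fun x y hxy => ?_
        have := key _ (sub_mem x.2 y.2) fun q => by
          have hxyq : x.1 (g q) = y.1 (g q) := congrFun hxy q
          simp [sub_eq_zero, boolVec_apply_inj, hxyq]
        exact Subtype.ext (boolVec_injective (sub_eq_zero.1 this))
    _ ≤ 2 ^ finrank K W := by
        simpa using Nat.pow_le_pow_right two_pos hd

theorem card_zeroOne_rows_mem_span_le {m : Type*} [Fintype m] [DecidableEq m] [Fintype n]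
    [DecidableEq K] (T : Finset m) (R : T → n → K) :
    Nat.card {M : Matrix m n K // (∀ i j, M i j = 0 ∨ M i j = 1) ∧ (∀ t : T, M t = R t) ∧
      ∀ i, M i ∈ span K (range R)} ≤ (2 ^ #T) ^ (Fintype.card m - #T) := by
  calc _ ≤ Nat.card (↥Tᶜ → {x : n → Bool // boolVec K x ∈ span K (range R)}) := by
        refine Nat.card_le_card_of_injective (fun M i => ⟨fun j => decide (M.1 i j = 1), ?_⟩)
          fun M M' h => Subtype.ext (funext fun i => ?_)
        · rw [boolVec_decide_eq (M.2.1 i)]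
          exact M.2.2.2 i
        by_cases hi : i ∈ T
        · exact (M.2.2.1 ⟨i, hi⟩).trans (M'.2.2.1 ⟨i, hi⟩).symm
        · rw [← boolVec_decide_eq (M.2.1 i), ← boolVec_decide_eq (M'.2.1 i)]
          exact congrArg (boolVec K ∘ Subtype.val) (congrFun h ⟨i, mem_compl.2 hi⟩)
    _ ≤ (2 ^ #T) ^ (Fintype.card m - #T) := by
        rw [Nat.card_fun, Nat.card_eq_fintype_card (α := ↥Tᶜ), Fintype.card_coe, card_compl]
        gcongr
        exact (card_boolVec_mem_le _).trans
          (Nat.pow_le_pow_right two_pos ((finrank_range_le_card R).trans_eq (by simp)))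

variable (K) in
def HasWideAnnihilator (A : ι → ι → Bool) : Prop :=
  ∃ μ : ι → K, 2 < (support μ).ncard ∧ ∀ v ∈ span K (range (boolVec K ∘ A)), μ ⬝ᵥ v = 0

theorem exists_hasWideAnnihilator_columns_mem_span [DecidableEq K] {u : ι → n → K}
    (h01 : ∀ i j, u i j = 0 ∨ u i j = 1) {μ : ι → K} (hμ : 2 < (support μ).ncard)
    (hdep : ∑ i, μ i • u i = 0) :
    ∃ A : ι → ι → Bool, HasWideAnnihilator K A ∧
      ∀ j, (fun i => u i j) ∈ span K (range (boolVec K ∘ A)) := by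
  have hcol : ∀ j, boolVec K (fun i => decide (u i j = 1)) = fun i => u i j :=
    fun j => boolVec_decide_eq fun i => h01 i j
  obtain ⟨A, hA⟩ := exists_square_boolVec_span_eq (K := K) fun j i => decide (u i j = 1)
  refine ⟨A, ⟨μ, hμ, fun v hv => dotProduct_eq_zero_of_mem_span ?_ (hA ▸ hv)⟩, fun j => ?_⟩
  · rintro _ ⟨j, rfl⟩
    simpa [hcol, dotProduct, Finset.sum_apply] using congrFun hdep j
  · rw [hA, ← hcol j]
    exact subset_span ⟨j, rfl⟩

end BoolVec

section CharZero

variable {K : Type*} [Field K] [CharZero K] {ι : Type*} [Fintype ι]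

theorem not_forall_exists_bool_affine_eq_zero {α β γ d : K} (hα : α ≠ 0) (hβ : β ≠ 0)
    (hγ : γ ≠ 0) :
    ¬ ∀ s t : Bool, ∃ p : Bool, α * p.toNat + β * s.toNat + γ * t.toNat + d = 0 := by
  intro h
  obtain ⟨p₀, h₀⟩ := h false false
  obtain ⟨p₁, h₁⟩ := h true false
  obtain ⟨p₂, h₂⟩ := h false true
  obtain ⟨p₃, h₃⟩ := h true true
  simp only [Bool.toNat_false, Bool.toNat_true, Nat.cast_zero, Nat.cast_one, mul_zero,
    mul_one, add_zero] at h₀ h₁ h₂ h₃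
  have h01 : p₀ ≠ p₁ := by
    rintro rfl
    exact hβ (by linear_combination h₁ - h₀)
  have h02 : p₀ ≠ p₂ := by
    rintro rfl
    exact hγ (by linear_combination h₂ - h₀)
  have h03 : α * (((p₀.toNat + p₃.toNat : ℕ) : K) - (p₁.toNat + p₂.toNat : ℕ)) = 0 := by
    push_cast
    linear_combination h₀ + h₃ - h₁ - h₂
  have hsum : p₀.toNat + p₃.toNat = p₁.toNat + p₂.toNat := by
    exact_mod_cast sub_eq_zero.1 ((mul_eq_zero.1 h03).resolve_left hα)
  revert h01 h02 hsum
  cases p₀ <;> cases p₁ <;> cases p₂ <;> cases p₃ <;> simp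

theorem card_le_three_of_dotProduct_boolVec_eq_zero {α : Type*} {μ : ι → K} {a b c : ι}
    (hab : a ≠ b) (hac : a ≠ c) (hbc : b ≠ c) (ha : μ a ≠ 0) (hb : μ b ≠ 0) (hc : μ c ≠ 0)
    {x : α → ι → Bool} (hx : Injective x) (hμx : ∀ p, μ ⬝ᵥ boolVec K (x p) = 0)
    (hagree : ∀ p p' i, i ≠ a → i ≠ b → i ≠ c → x p i = x p' i) : Nat.card α ≤ 3 := by
  classical
  set E : Finset ι := {a, b, c}
  have hagreeE : ∀ p p', ∀ i ∉ E, x p i = x p' i := fun p p' i hi => by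
    simp only [E, mem_insert, mem_singleton, not_or] at hi
    exact hagree p p' i hi.1 hi.2.1 hi.2.2
  have hsplit : ∀ p, μ a * boolVec K (x p) a + μ b * boolVec K (x p) b +
      μ c * boolVec K (x p) c + ∑ i ∈ Eᶜ, μ i * boolVec K (x p) i = 0 := by
    intro p
    rw [← hμx p, dotProduct, ← sum_add_sum_compl E]
    simp [E, hab, hac, hbc, add_assoc]
  have hrest : ∀ p p', ∑ i ∈ Eᶜ, μ i * boolVec K (x p) i = ∑ i ∈ Eᶜ, μ i * boolVec K (x p') i :=
    fun p p' => sum_congr rfl fun i hi => by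
      rw [boolVec_apply_inj.2 (hagreeE p p' i (mem_compl.1 hi))]
  -- The coordinates `b` and `c` determine the coordinate `a`, and not all four values of
  -- `(x p b, x p c)` occur.
  let φ (p : α) : Bool × Bool := (x p b, x p c)
  have hφ : Injective φ := by
    intro p p' hpp'
    simp only [φ, Prod.mk.injEq] at hpp'
    have hpa : x p a = x p' a := by
      have h := (hsplit p).trans (hsplit p').symm
      rw [boolVec_apply_inj.2 hpp'.1, boolVec_apply_inj.2 hpp'.2, hrest p p'] at h
      exact boolVec_apply_inj.1 (mul_left_cancel₀ ha (by linear_combination h))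
    refine hx (funext fun i => ?_)
    by_cases hi : i ∈ E
    · simp only [E, mem_insert, mem_singleton] at hi
      rcases hi with rfl | rfl | rfl
      exacts [hpa, hpp'.1, hpp'.2]
    · exact hagreeE p p' i hi
  have hφ' : ¬ Surjective φ := by
    intro hsurj
    obtain ⟨p₀, -⟩ := hsurj (false, false)
    refine not_forall_exists_bool_affine_eq_zero ha hb hc
      (d := ∑ i ∈ Eᶜ, μ i * boolVec K (x p₀) i) fun s t => ?_
    obtain ⟨p, hp⟩ := hsurj (s, t)
    simp only [φ, Prod.mk.injEq] at hp
    refine ⟨x p a, ?_⟩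
    rw [← hrest p, ← hp.1, ← hp.2]
    exact hsplit p
  have := Finite.of_injective φ hφ
  have := Fintype.ofFinite α
  have := Fintype.card_lt_of_injective_not_surjective φ hφ hφ'
  simp only [Fintype.card_prod, Fintype.card_bool] at this
  rw [Nat.card_eq_fintype_card]
  omega

theorem card_dotProduct_boolVec_eq_zero_le {μ : ι → K} (hμ : 2 < (support μ).ncard) :
    Nat.card {x : ι → Bool // μ ⬝ᵥ boolVec K x = 0} ≤ 3 * 2 ^ (Fintype.card ι - 3) := by
  classical
  obtain ⟨a, b, c, ha, hb, hc, hab, hac, hbc⟩ := (Set.two_lt_ncard_iff (Set.toFinite _)).1 hμ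
  set E : Finset ι := {a, b, c}
  have hE : #E = 3 := by simp [E, hab, hac, hbc]
  let ρ (x : {x : ι → Bool // μ ⬝ᵥ boolVec K x = 0}) (i : ↥Eᶜ) : Bool := x.1 i
  calc _ ≤ Nat.card (↥Eᶜ → Bool) * 3 := Nat.card_le_card_mul_of_card_fiber_le ρ fun y =>
        card_le_three_of_dotProduct_boolVec_eq_zero hab hac hbc ha hb hc
          (Subtype.val_injective.comp Subtype.val_injective) (fun p => p.1.2)
          fun p p' i hia hib hic => congrFun (p.2.trans p'.2.symm) ⟨i, by simp [E, hia, hib, hic]⟩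
    _ = 3 * 2 ^ (Fintype.card ι - 3) := by simp [Nat.card_eq_fintype_card, hE, mul_comm]

theorem card_sigma_hasWideAnnihilator_le (N : ℕ) :
    Nat.card (Σ A : {A : ι → ι → Bool // HasWideAnnihilator K A},
      Fin N → {x : ι → Bool // boolVec K x ∈ span K (range (boolVec K ∘ A.1))}) ≤
      2 ^ (Fintype.card ι ^ 2) * (3 * 2 ^ (Fintype.card ι - 3)) ^ N := by
  classical
  rw [Nat.card_sigma]
  refine (sum_le_sum fun A _ => (?_ : _ ≤ (3 * 2 ^ (Fintype.card ι - 3)) ^ N)).trans ?_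
  · obtain ⟨μ, hμ, hμA⟩ := A.2
    rw [Nat.card_fun, Nat.card_fin]
    refine Nat.pow_le_pow_left ((Nat.card_le_card_of_injective
      (fun x => (⟨x.1, hμA _ x.2⟩ : {x : ι → Bool // μ ⬝ᵥ boolVec K x = 0})) ?_).trans
      (card_dotProduct_boolVec_eq_zero_le hμ)) N
    intro x x' h
    simp only [Subtype.mk.injEq] at h
    exact Subtype.ext h
  · rw [sum_const, card_univ, smul_eq_mul]
    gcongr
    refine (Fintype.card_subtype_le _).trans_eq ?_
    simp [sq, pow_mul]

end CharZero

theorem Finset.exists_mem_forall_apply_ne_of_card_lt {α β : Type*} [DecidableEq β]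
    {s t : Finset α} {f : α → β} (hf : Set.InjOn f s) (hts : #t < #s) :
    ∃ i ∈ s, ∀ i' ∈ t, f i ≠ f i' := by
  by_contra! h
  have hsub : s.image f ⊆ t.image f := fun v hv => by
    obtain ⟨i, hi, rfl⟩ := mem_image.1 hv
    obtain ⟨i', hi', hii'⟩ := h i hi
    exact mem_image.2 ⟨i', hi', hii'.symm⟩
  have := (card_le_card hsub).trans card_image_le
  rw [card_image_of_injOn hf] at this
  omega

section Frames

variable {l N : ℕ}

theorem colSpanDim_eq_finrank_span_rows (M : Matrix (Fin l) (Fin N) ℚ) :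
    colSpanDim M N = finrank ℚ (span ℚ (range M)) := by
  have hcols : {v : Fin l → ℚ | ∃ j : Fin N, (j : ℕ) < N ∧ v = fun i => M i j} = range M.col := by
    ext v
    simp [Matrix.col_apply', eq_comm]
  rw [colSpanDim, hcols, ← Matrix.rank_eq_finrank_span_cols, Matrix.rank_eq_finrank_span_row]
  rfl

def IsZeroOneWithExtraRows (M : Matrix (Fin l) (Fin N) ℚ) (r : ℕ) : Prop :=
  (∀ i j, M i j = 0 ∨ M i j = 1) ∧ colSpanDim M N = r ∧
    ∃ s : Finset (Fin l), r + 1 ≤ s.card ∧ (∀ i ∈ s, M i ≠ 0) ∧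
      ∀ i ∈ s, ∀ i' ∈ s, i ≠ i' → M i ≠ M i'

/-- The rows indexed by `T` span the row space of `M`, and a row `M i₀`, indexed by `none` next
to the rows `M t` indexed by `some t`, enters a linear relation with them whose coefficients `μ`
have at least three nonzero entries. -/
def IsFrame (M : Matrix (Fin l) (Fin N) ℚ) (T : Finset (Fin l)) : Prop :=
  (∀ i, M i ∈ span ℚ (range fun t : T => M t)) ∧
    ∃ (i₀ : Fin l) (μ : Option T → ℚ), 2 < (support μ).ncard ∧
      ∑ o, μ o • o.elim (M i₀) (fun t => M t) = 0

theorem IsFrame.two_le_card {M : Matrix (Fin l) (Fin N) ℚ} {T : Finset (Fin l)}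
    (h : IsFrame M T) : 2 ≤ #T := by
  obtain ⟨-, -, μ, hμ, -⟩ := h
  have := hμ.trans_le (Set.ncard_le_card _)
  simp only [Nat.card_eq_fintype_card, Fintype.card_option, Fintype.card_coe] at this
  omega

theorem exists_isFrame {r : ℕ} {M : Matrix (Fin l) (Fin N) ℚ}
    (hM : IsZeroOneWithExtraRows M r) : ∃ T : Finset (Fin l), #T = r ∧ IsFrame M T := by
  classical
  obtain ⟨h01, hrank, s, hs, hs0, hsinj⟩ := hM
  rw [colSpanDim_eq_finrank_span_rows] at hrank
  subst hrank
  obtain ⟨g, hli, hspan⟩ := exists_linearIndependent_comp_span_eq (K := ℚ) M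
  have hg : Injective g := hli.injective.of_comp
  set T := univ.image g
  have hT : #T = finrank ℚ (span ℚ (range M)) := by simp [T, card_image_of_injective _ hg]
  have hMT : Set.InjOn M T := by
    intro i hi i' hi' h
    obtain ⟨p, -, rfl⟩ := mem_image.1 hi
    obtain ⟨p', -, rfl⟩ := mem_image.1 hi'
    rw [hli.injective h]
  have hspanT : span ℚ (range fun t : T => M t) = span ℚ (range M) := by
    refine le_antisymm (span_mono (Set.range_subset_iff.2 fun t => ⟨t, rfl⟩)) ?_
    rw [← hspan]
    exact span_mono (Set.range_subset_iff.2 fun p => ⟨⟨g p, by simp [T]⟩, rfl⟩)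
  refine ⟨T, hT, fun i => hspanT ▸ subset_span ⟨i, rfl⟩, ?_⟩
  obtain ⟨i₀, hi₀s, hi₀⟩ := exists_mem_forall_apply_ne_of_card_lt (t := T) (f := M)
    (fun i hi i' hi' h => of_not_not fun hne => hsinj i hi i' hi' hne h) (by omega)
  obtain ⟨c, hc⟩ := (mem_span_range_iff_exists_fun ℚ).1
    (hspanT ▸ subset_span ⟨i₀, rfl⟩ : M i₀ ∈ span ℚ (range fun t : T => M t))
  have hdep : ∑ o, (fun o : Option T => o.elim (-1) c) o •
      o.elim (M i₀) (fun t => M t) = 0 := by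
    simp only [Fintype.sum_option, Option.elim_none, Option.elim_some, neg_one_smul, hc,
      neg_add_cancel]
  refine ⟨i₀, _, two_lt_ncard_support_of_sum_smul_eq_zero ?_ ?_ ?_ ?_ hdep, hdep⟩
  · rintro (_ | t) (_ | t') h
    · rfl
    · exact absurd h (hi₀ t' t'.2)
    · exact absurd h.symm (hi₀ t t.2)
    · exact congrArg some (Subtype.ext (hMT t.2 t'.2 h))
  · rintro (_ | ⟨t, ht⟩)
    · exact hs0 i₀ hi₀s
    · obtain ⟨p, -, rfl⟩ := mem_image.1 ht
      exact hli.ne_zero p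
  · rintro (_ | t) j <;> exact h01 _ j
  · exact Function.ne_iff.2 ⟨none, by simp⟩

theorem card_isFrame_le (T : Finset (Fin l)) :
    Nat.card {M : Matrix (Fin l) (Fin N) ℚ // (∀ i j, M i j = 0 ∨ M i j = 1) ∧ IsFrame M T} ≤
      2 ^ ((#T + 1) ^ 2) * (3 * 2 ^ (#T - 2)) ^ N * (2 ^ #T) ^ (l - #T) := by
  classical
  set F := {M : Matrix (Fin l) (Fin N) ℚ // (∀ i j, M i j = 0 ∨ M i j = 1) ∧ IsFrame M T}
  choose i₀ μ hμ hdep using fun M : F => M.2.2.2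
  let u (M : F) (o : Option T) : Fin N → ℚ := o.elim (M.1 (i₀ M)) fun t => M.1 t
  have hu01 : ∀ M o j, u M o j = 0 ∨ u M o j = 1 := fun M o j => by
    cases o <;> exact M.2.1 _ j
  choose A hA using fun M : F => exists_hasWideAnnihilator_columns_mem_span (hu01 M) (hμ M) (hdep M)
  -- The columns of `u M` determine the rows of `M` in `T`.
  let key (M : F) : Σ A : {A : Option T → Option T → Bool // HasWideAnnihilator ℚ A},
      Fin N → {x // boolVec ℚ x ∈ span ℚ (range (boolVec ℚ ∘ A.1))} :=
    ⟨⟨A M, (hA M).1⟩, fun j => ⟨fun o => decide (u M o j = 1), by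
      rw [boolVec_decide_eq fun o => hu01 M o j]
      exact (hA M).2 j⟩⟩
  have hcard := card_sigma_hasWideAnnihilator_le (K := ℚ) (ι := Option T) N
  rw [Fintype.card_option, Fintype.card_coe, show #T + 1 - 3 = #T - 2 by omega] at hcard
  refine (Nat.card_le_card_mul_of_card_fiber_le key fun σ => ?_).trans
    (Nat.mul_le_mul_right _ hcard)
  let R (t : T) (j : Fin N) : ℚ := boolVec ℚ (σ.2 j).1 (some t)
  have hrows : ∀ M : {M // key M = σ}, ∀ t : T, M.1.1 t = R t := by
    rintro ⟨M, rfl⟩ t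
    funext j
    exact (congrFun (boolVec_decide_eq fun o => hu01 M o j) (some t)).symm
  have := finite_zeroOne (P := fun M : Matrix (Fin l) (Fin N) ℚ =>
    (∀ i j, M i j = 0 ∨ M i j = 1) ∧ (∀ t : T, M t = R t) ∧ ∀ i, M i ∈ span ℚ (range R))
    fun _ h => h.1
  refine le_trans ?_ ((card_zeroOne_rows_mem_span_le T R).trans_eq (by simp))
  refine Nat.card_le_card_of_injective (fun M => ⟨M.1.1, M.1.2.1, hrows M, fun i => ?_⟩) ?_
  · rw [← funext (hrows M)]
    exact M.1.2.2.1 i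
  · intro M M' h
    simp only [Subtype.mk.injEq] at h
    exact Subtype.ext (Subtype.ext h)

theorem card_isZeroOneWithExtraRows_le (l N r : ℕ) :
    Nat.card {M : Matrix (Fin l) (Fin N) ℚ // IsZeroOneWithExtraRows M r} ≤
      2 ^ l * (2 ^ ((r + 1) ^ 2) * (3 * 2 ^ (r - 2)) ^ N * (2 ^ r) ^ (l - r)) := by
  choose T hT using fun M : {M : Matrix (Fin l) (Fin N) ℚ // IsZeroOneWithExtraRows M r} =>
    exists_isFrame M.2
  calc _ ≤ Nat.card (Finset (Fin l)) *
        (2 ^ ((r + 1) ^ 2) * (3 * 2 ^ (r - 2)) ^ N * (2 ^ r) ^ (l - r)) :=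
        Nat.card_le_card_mul_of_card_fiber_le T fun T₀ => ?_
    _ = _ := by simp
  rcases isEmpty_or_nonempty {M // T M = T₀} with h | ⟨⟨M₀, hM₀⟩⟩
  · simp
  have hr : #T₀ = r := hM₀ ▸ (hT M₀).1
  have := finite_zeroOne (P := fun M : Matrix (Fin l) (Fin N) ℚ =>
    (∀ i j, M i j = 0 ∨ M i j = 1) ∧ IsFrame M T₀) fun _ h => h.1
  refine le_trans ?_ (hr ▸ card_isFrame_le T₀)
  refine Nat.card_le_card_of_injective (fun M => ⟨M.1.1, M.1.2.1, ?_⟩) fun M M' h => ?_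
  · have := (hT M.1).2
    rwa [M.2] at this
  · simp only [Subtype.mk.injEq] at h
    exact Subtype.ext (Subtype.ext h)

end Frames

theorem count_le_two_pow_sq_mul_rpow {l N r : ℕ} (hr : 2 ≤ r) (hrl : r < l)
    (hN : 10 * l ≤ N) :
    ((2 ^ l * (2 ^ ((r + 1) ^ 2) * (3 * 2 ^ (r - 2)) ^ N * (2 ^ r) ^ (l - r)) : ℕ) : ℝ) ≤
      2 ^ (l ^ 2) * (2 : ℝ) ^ (((r : ℝ) - 1 / 10) * N) := by
  have h3 : (3 : ℝ) ≤ 2 ^ (8 / 5 : ℝ) :=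
    calc (3 : ℝ) = ((3 : ℝ) ^ 5) ^ ((5 : ℕ) : ℝ)⁻¹ :=
          (Real.pow_rpow_inv_natCast (by norm_num) (by norm_num)).symm
      _ ≤ ((2 : ℝ) ^ 8) ^ ((5 : ℕ) : ℝ)⁻¹ := by gcongr; norm_num
      _ = 2 ^ (8 / 5 : ℝ) := by
        rw [← Real.rpow_natCast, ← Real.rpow_mul (by norm_num)]
        norm_num
  set a := l + (r + 1) ^ 2 + r * (l - r) + (r - 2) * N
  have hexp : (a : ℝ) + 8 / 5 * N ≤ (l ^ 2 : ℕ) + ((r : ℝ) - 1 / 10) * N := by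
    have hrl' : (r : ℝ) + 1 ≤ l := by exact_mod_cast hrl
    have hN' : (10 * l : ℝ) ≤ N := by exact_mod_cast hN
    simp only [a]
    push_cast [Nat.cast_sub hr, Nat.cast_sub hrl.le]
    nlinarith
  calc ((2 ^ l * (2 ^ ((r + 1) ^ 2) * (3 * 2 ^ (r - 2)) ^ N * (2 ^ r) ^ (l - r)) : ℕ) : ℝ)
      = 2 ^ a * 3 ^ N := by
        simp only [a]
        push_cast
        ring
    _ ≤ 2 ^ (a : ℝ) * (2 ^ (8 / 5 : ℝ)) ^ N := by
        rw [Real.rpow_natCast]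
        gcongr
    _ = 2 ^ ((a : ℝ) + 8 / 5 * N) := by
        rw [← Real.rpow_natCast _ N, ← Real.rpow_mul (by norm_num), Real.rpow_add (by norm_num)]
    _ ≤ 2 ^ ((l ^ 2 : ℕ) + ((r : ℝ) - 1 / 10) * N) :=
        Real.rpow_le_rpow_of_exponent_le (by norm_num) hexp
    _ = 2 ^ (l ^ 2) * (2 : ℝ) ^ (((r : ℝ) - 1 / 10) * N) := by
        rw [Real.rpow_add (by norm_num), Real.rpow_natCast]

theorem statement_16 :
    ∃ C : ℝ, ∀ l N r : ℕ, 1 ≤ l → 10 * l ≤ N → 1 ≤ r → r < l →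
      (Nat.card {M : Matrix (Fin l) (Fin N) ℚ //
          (∀ i j, M i j = 0 ∨ M i j = 1) ∧
          colSpanDim M N = r ∧
          ∃ s : Finset (Fin l), r + 1 ≤ s.card ∧ (∀ i ∈ s, M i ≠ 0) ∧
            ∀ i ∈ s, ∀ i' ∈ s, i ≠ i' → M i ≠ M i'} : ℝ) ≤
        C * 2 ^ (l ^ 2) * (2 : ℝ) ^ (((r : ℝ) - 1 / 10) * (N : ℝ)) := by
  refine ⟨1, fun l N r _ hN _ hrl => ?_⟩
  change (Nat.card {M : Matrix (Fin l) (Fin N) ℚ // IsZeroOneWithExtraRows M r} : ℝ) ≤ _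
  rw [one_mul]
  rcases isEmpty_or_nonempty {M : Matrix (Fin l) (Fin N) ℚ // IsZeroOneWithExtraRows M r}
    with h | ⟨⟨M, hM⟩⟩
  · rw [Nat.card_of_isEmpty, Nat.cast_zero]
    positivity
  obtain ⟨T, rfl, hT⟩ := exists_isFrame hM
  exact (Nat.cast_le.2 (card_isZeroOneWithExtraRows_le l N #T)).trans
    (count_le_two_pow_sq_mul_rpow hT.two_le_card hrl hN)
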